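/- arXiv:1610.03363 — 3 statements merged into one kernel-verified Lean document; each statement's English description precedes it below -/
import Mathlib

section
/- Let V : ℝ → ℝ be C², let c ∈ ℝ, and let u₋ < u₊ satisfy V(u₋) = V(u₊) = c, V(u) < c for all u ∈ (u₋, u₊), V'(u₋) < 0 and V'(u₊) > 0. Then the solution of the Hamiltonian system u̇ = v, v̇ = −V'(u) with initial condition (u(0), v(0)) = (u₋, 0) is periodic, the improper integral ∫_{u₋}^{u₊} du/√(2(c − V(u))) converges, and the period of the solution equals T_c = 2 ∫_{u₋}^{u₊} du/√(2(c − V(u))). -/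
/-!
Energy conservation gives `v² = 2 (c - V u)`, so the orbit stays in `{V ≤ c}`; as `V` crosses
the level `c` transversally at `uLo` and `uHi`, it is confined to `[uLo, uHi]`, and the same
transversality makes `1 / √(2 (c - V))` integrable, being `O(|x - u±|^(-1/2))` at the ends.
While `v > 0`, the clock `τ ↦ ∫_{uLo}^{u τ} dx / √(2 (c - V x))` has derivative `1`; since it is
bounded by the finite integral, `v` must vanish, and at its first positive zero `T` the orbit
sits at `uHi` with `T = ∫_{uLo}^{uHi}`. Finally the system is reversible and solutions confined
to `[uLo, uHi]` are unique, so the orbit is symmetric about `t = 0` and `t = T`, where `v`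
vanishes; the two reflections compose to the translation by `2 T`.
-/

open MeasureTheory intervalIntegral Set Filter Topology

theorem HasDerivAt.eventually_nhdsGT_sub_lt {f : ℝ → ℝ} {f' a k : ℝ} (hf : HasDerivAt f f' a)
    (hk : f' < k) : ∀ᶠ x in 𝓝[>] a, f x - f a < k * (x - a) := by
  filter_upwards [nhdsGT_le_nhdsNE a (hasDerivAt_iff_tendsto_slope.1 hf (Iio_mem_nhds hk)),
    self_mem_nhdsWithin] with x (hx : slope f a x < k) (hax : a < x)
  rwa [slope_def_field, div_lt_iff₀ (sub_pos.2 hax)] at hx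

theorem HasDerivAt.eventually_nhdsLT_lt_sub {f : ℝ → ℝ} {f' a k : ℝ} (hf : HasDerivAt f f' a)
    (hk : f' < k) : ∀ᶠ x in 𝓝[<] a, k * (x - a) < f x - f a := by
  filter_upwards [nhdsLT_le_nhdsNE a (hasDerivAt_iff_tendsto_slope.1 hf (Iio_mem_nhds hk)),
    self_mem_nhdsWithin] with x (hx : slope f a x < k) (hxa : x < a)
  rwa [slope_def_field, div_lt_iff_of_neg (sub_neg.2 hxa)] at hx

theorem IsPreconnected.subset_Icc_of_eventually_notMem {S : Set ℝ} (hS : IsPreconnected S)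
    {a b : ℝ} (ha : a ∈ S) (hab : a ≤ b) (hlt : ∀ᶠ x in 𝓝[<] a, x ∉ S)
    (hgt : ∀ᶠ x in 𝓝[>] b, x ∉ S) : S ⊆ Icc a b := by
  intro y hy
  by_contra hyab
  rcases le_or_gt a y with hay | hya
  · have hby : b < y := lt_of_not_ge fun hyb => hyab ⟨hay, hyb⟩
    obtain ⟨x, hxS, hx⟩ := (hgt.and (Ioo_mem_nhdsGT hby)).exists
    exact hxS (hS.Icc_subset ha hy ⟨hab.trans hx.1.le, hx.2.le⟩)
  · obtain ⟨x, hxS, hx⟩ := (hlt.and (Ioo_mem_nhdsLT hya)).exists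
    exact hxS (hS.Icc_subset hy ha ⟨hx.1.le, hx.2.le⟩)

theorem exists_first_zero_of_eventually_pos {f : ℝ → ℝ} {a b : ℝ} (hf : Continuous f)
    (hpos : ∀ᶠ x in 𝓝[>] a, 0 < f x) (hab : a < b) (hb : f b ≤ 0) :
    ∃ T ∈ Ioc a b, f T = 0 ∧ ∀ t ∈ Ioo a T, 0 < f t := by
  obtain ⟨ε, haε, hε⟩ := mem_nhdsGT_iff_exists_Ioc_subset.1 hpos
  have hεb : ε < b := lt_of_not_ge fun hbε => (hε ⟨hab, hbε⟩ : 0 < f b).not_ge hb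
  obtain ⟨T, ⟨⟨hεT, hTb⟩, hT⟩, hleast⟩ :=
    (isCompact_Icc.inter_right (isClosed_le hf continuous_const)).exists_isLeast
      ⟨b, ⟨hεb.le, le_rfl⟩, hb⟩
  have haT : a < T := lt_of_lt_of_le haε hεT
  have hbefore : ∀ t ∈ Ioo a T, 0 < f t := fun t ht => by
    rcases le_or_gt t ε with htε | hεt
    · exact hε ⟨ht.1, htε⟩
    · exact lt_of_not_ge fun hft => (hleast ⟨⟨hεt.le, ht.2.le.trans hTb⟩, hft⟩).not_gt ht.2
  refine ⟨T, ⟨haT, hTb⟩, le_antisymm hT ?_, hbefore⟩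
  exact ge_of_tendsto (hf.continuousWithinAt (s := Iio T) (x := T)).tendsto
    (mem_of_superset (Ioo_mem_nhdsLT haT) fun t ht => (hbefore t ht).le)

theorem continuousAt_one_div_sqrt {g : ℝ → ℝ} {x : ℝ} (hg : ContinuousAt g x) (hx : 0 < g x) :
    ContinuousAt (fun y => 1 / √(g y)) x :=
  continuousAt_const.div hg.sqrt (Real.sqrt_pos.2 hx).ne'

theorem intervalIntegrable_one_div_sqrt_of_mul_sub_le {g : ℝ → ℝ} {a p k : ℝ}
    (hg : Measurable g) (hk : 0 < k) (hap : a ≤ p) (hgp : ∀ x ∈ Ioc a p, k * (x - a) ≤ g x) :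
    IntervalIntegrable (fun x => 1 / √(g x)) volume a p := by
  have hcmp : IntervalIntegrable (fun x => (√k)⁻¹ * (x - a) ^ (-(1 / 2) : ℝ)) volume a p := by
    have h := (intervalIntegrable_rpow' (a := 0) (b := p - a) (by norm_num : (-1 : ℝ) < -(1 / 2))
      ).comp_sub_right a
    simpa using h.const_mul (√k)⁻¹
  refine hcmp.mono_fun (by fun_prop : Measurable fun x => 1 / √(g x)).aestronglyMeasurable ?_
  rw [uIoc_of_le hap]
  filter_upwards [ae_restrict_mem measurableSet_Ioc] with x hx
  have hxa : 0 < x - a := sub_pos.2 hx.1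
  rw [Real.norm_of_nonneg (by positivity), Real.norm_of_nonneg (by positivity),
    Real.rpow_neg hxa.le, ← Real.sqrt_eq_rpow, ← mul_inv, ← Real.sqrt_mul hk.le, one_div]
  exact inv_anti₀ (by positivity) (Real.sqrt_le_sqrt (hgp x hx))

theorem exists_intervalIntegrable_one_div_sqrt_of_hasDerivAt_neg {V : ℝ → ℝ} {c a b d : ℝ}
    (hV : Continuous V) (hab : a < b) (ha : V a = c) (hd : HasDerivAt V d a) (hd0 : d < 0) :
    ∃ p ∈ Ioo a b, IntervalIntegrable (fun x => 1 / √(2 * (c - V x))) volume a p := by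
  obtain ⟨p, hap, hp⟩ := mem_nhdsGT_iff_exists_Ioc_subset.1
    (inter_mem (hd.eventually_nhdsGT_sub_lt (by linarith : d < d / 2)) (Ioo_mem_nhdsGT hab))
  refine ⟨p, (hp ⟨hap, le_rfl⟩).2, intervalIntegrable_one_div_sqrt_of_mul_sub_le (by fun_prop)
    (neg_pos.2 hd0) (le_of_lt hap) fun x hx => ?_⟩
  have h : V x - V a < d / 2 * (x - a) := (hp hx).1
  linarith

theorem intervalIntegrable_one_div_sqrt_of_potential_well {V : ℝ → ℝ} {c a b da db : ℝ}
    (hV : Continuous V) (hab : a < b) (ha : V a = c) (hb : V b = c)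
    (hin : ∀ x ∈ Ioo a b, V x < c) (hda : HasDerivAt V da a) (hdb : HasDerivAt V db b)
    (hda0 : da < 0) (hdb0 : 0 < db) :
    IntervalIntegrable (fun x => 1 / √(2 * (c - V x))) volume a b := by
  obtain ⟨p, hp, hap⟩ :=
    exists_intervalIntegrable_one_div_sqrt_of_hasDerivAt_neg hV hab ha hda hda0
  have hdb' : HasDerivAt (fun x => V (-x)) (-db) (-b) := by
    have h : HasDerivAt V db (-(-b)) := by rwa [neg_neg]
    simpa [Function.comp_def] using h.comp (-b) (hasDerivAt_neg (-b))
  obtain ⟨q, hq, hqb⟩ := exists_intervalIntegrable_one_div_sqrt_of_hasDerivAt_neg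
    (V := fun x => V (-x)) (by fun_prop) (neg_lt_neg hab) (by simpa using hb) hdb'
    (neg_neg_of_pos hdb0)
  have hpq : IntervalIntegrable (fun x => 1 / √(2 * (c - V x))) volume p (-q) := by
    refine ContinuousOn.intervalIntegrable fun x hx => ContinuousAt.continuousWithinAt ?_
    have hx' : x ∈ Ioo a b :=
      ordConnected_Ioo.uIcc_subset hp ⟨by linarith [hq.2], by linarith [hq.1]⟩ hx
    exact continuousAt_one_div_sqrt (by fun_prop) (by linarith [hin x hx'])
  have hqb' : IntervalIntegrable (fun x => 1 / √(2 * (c - V x))) volume (-q) b := by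
    rw [IntervalIntegrable.iff_comp_neg]
    simpa using hqb.symm
  exact (hap.trans hpq).trans hqb'

theorem newton_energy_eq {V u v : ℝ → ℝ} (hV : Differentiable ℝ V)
    (hu : ∀ t, HasDerivAt u (v t) t) (hv : ∀ t, HasDerivAt v (-deriv V (u t)) t) (s t : ℝ) :
    v t ^ 2 / 2 + V (u t) = v s ^ 2 / 2 + V (u s) := by
  have hE : ∀ t, HasDerivAt (fun t => v t ^ 2 / 2 + V (u t)) 0 t := fun t => by
    have h := (((hv t).fun_pow 2).div_const 2).fun_add ((hV (u t)).hasDerivAt.comp t (hu t))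
    exact h.congr_deriv (by norm_num; ring)
  exact is_const_of_deriv_eq_zero (fun t => (hE t).differentiableAt) (fun t => (hE t).deriv) t s

theorem range_subset_Icc_of_potential_le {V u : ℝ → ℝ} {c a b da db : ℝ} (hu : Continuous u)
    (ha : a ∈ range u) (hab : a ≤ b) (hVa : V a = c) (hVb : V b = c) (hda : HasDerivAt V da a)
    (hdb : HasDerivAt V db b) (hda0 : da < 0) (hdb0 : 0 < db) (hle : ∀ t, V (u t) ≤ c) :
    range u ⊆ Icc a b := by
  have hout : ∀ x, c < V x → x ∉ range u := by
    rintro x hx ⟨t, rfl⟩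
    exact (hle t).not_gt hx
  refine (isPreconnected_range hu).subset_Icc_of_eventually_notMem ha hab ?_ ?_
  · filter_upwards [hda.eventually_nhdsLT_lt_sub hda0] with x hx
    rw [zero_mul] at hx
    exact hout x (by linarith)
  · filter_upwards [hdb.neg.eventually_nhdsGT_sub_lt (neg_neg_of_pos hdb0)] with x hx
    simp only [Pi.neg_apply, zero_mul] at hx
    exact hout x (by linarith)

theorem integral_one_div_sqrt_eq_sub_of_pos {V u v : ℝ → ℝ} {c a b s t : ℝ} (hV : Continuous V)
    (hu : ∀ τ, HasDerivAt u (v τ) τ) (hE : ∀ τ, v τ ^ 2 = 2 * (c - V (u τ)))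
    (hmem : ∀ τ, u τ ∈ Icc a b)
    (hint : IntervalIntegrable (fun x => 1 / √(2 * (c - V x))) volume a b)
    (hst : s < t) (hpos : ∀ τ ∈ Ioo s t, 0 < v τ) :
    ∫ x in u s..u t, 1 / √(2 * (c - V x)) = t - s := by
  set f : ℝ → ℝ := fun x => 1 / √(2 * (c - V x))
  set Φ : ℝ → ℝ := fun τ => ∫ x in a..u τ, f x
  have hab : a ≤ b := (hmem 0).1.trans (hmem 0).2
  have hint' : ∀ y ∈ Icc a b, IntervalIntegrable f volume a y := fun y hy =>
    hint.mono_set (by rw [uIcc_of_le hab, uIcc_of_le hy.1]; exact Icc_subset_Icc_right hy.2)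
  have hΦc : ContinuousOn Φ (Icc s t) := by
    have hF := continuousOn_primitive_interval' hint left_mem_uIcc
    rw [uIcc_of_le hab] at hF
    exact (hF.comp_continuous (continuous_iff_continuousAt.2 fun τ => (hu τ).continuousAt)
      hmem).continuousOn
  have hΦd : ∀ τ ∈ Ioo s t, HasDerivAt Φ 1 τ := fun τ hτ => by
    have hvτ : √(2 * (c - V (u τ))) = v τ := by rw [← hE τ, Real.sqrt_sq (hpos τ hτ).le]
    have hF : HasDerivAt (fun y => ∫ x in a..y, f x) (f (u τ)) (u τ) :=
      integral_hasDerivAt_right (hint' _ (hmem τ))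
        (by fun_prop : Measurable f).aestronglyMeasurable.stronglyMeasurableAtFilter
        (continuousAt_one_div_sqrt (by fun_prop) (by rw [← hE τ]; exact pow_pos (hpos τ hτ) 2))
    refine (hF.comp τ (hu τ)).congr_deriv ?_
    rw [show f (u τ) = 1 / √(2 * (c - V (u τ))) from rfl, hvτ, one_div_mul_cancel (hpos τ hτ).ne']
  obtain ⟨ξ, -, hslope⟩ := exists_hasDerivAt_eq_slope Φ (fun _ => 1) hst hΦc hΦd
  rw [← integral_interval_sub_left (hint' _ (hmem t)) (hint' _ (hmem s))]
  rw [eq_div_iff (sub_pos.2 hst).ne'] at hslope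
  linarith

theorem exists_turning_time_eq_integral {V u v : ℝ → ℝ} {c a b : ℝ} (hV : Continuous V)
    (hin : ∀ x ∈ Ioo a b, V x < c) (hu : ∀ t, HasDerivAt u (v t) t)
    (hv : ∀ t, HasDerivAt v (-deriv V (u t)) t) (hE : ∀ t, v t ^ 2 = 2 * (c - V (u t)))
    (hmem : ∀ t, u t ∈ Icc a b)
    (hint : IntervalIntegrable (fun x => 1 / √(2 * (c - V x))) volume a b)
    (hu0 : u 0 = a) (hv0 : v 0 = 0) (hd : deriv V a < 0) :
    ∃ T > 0, v T = 0 ∧ ∫ x in a..b, 1 / √(2 * (c - V x)) = T := by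
  have hstart : ∀ᶠ t in 𝓝[>] 0, 0 < v t := by
    filter_upwards [(hv 0).neg.eventually_nhdsGT_sub_lt (k := 0) (by rw [hu0]; linarith)] with t ht
    simp only [Pi.neg_apply, hv0, zero_mul] at ht
    linarith
  obtain ⟨t₁, ht₁, hvt₁⟩ : ∃ t₁ > 0, v t₁ ≤ 0 := by
    by_contra! hpos
    set I := ∫ x in a..b, 1 / √(2 * (c - V x))
    have hI : 0 ≤ I := integral_nonneg ((hmem 0).1.trans (hmem 0).2) fun x _ => by positivity
    have htime := integral_one_div_sqrt_eq_sub_of_pos hV hu hE hmem hint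
      (by linarith : (0 : ℝ) < I + 1) fun t ht => hpos t ht.1
    rw [hu0] at htime
    have hle : ∫ x in a..u (I + 1), 1 / √(2 * (c - V x)) ≤ I :=
      integral_mono_interval le_rfl (hmem _).1 (hmem _).2
        (Eventually.of_forall fun x => by positivity) hint
    linarith
  obtain ⟨T, ⟨hT, -⟩, hvT, hpos⟩ := exists_first_zero_of_eventually_pos
    (continuous_iff_continuousAt.2 fun t => (hv t).continuousAt) hstart ht₁ hvt₁
  have htime := integral_one_div_sqrt_eq_sub_of_pos hV hu hE hmem hint hT hpos
  have huT : u T = b := by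
    rcases eq_endpoints_or_mem_Ioo_of_mem_Icc (hmem T) with h | h | h
    · rw [hu0, h, integral_same] at htime
      linarith
    · exact h
    · have := hE T
      rw [hvT] at this
      linarith [hin _ h]
  exact ⟨T, hT, hvT, by rw [hu0, huT] at htime; linarith⟩

theorem newton_time_reversal {V u v : ℝ → ℝ} {s : Set ℝ} {K : NNReal}
    (hK : LipschitzOnWith K (deriv V) s) (hu : ∀ t, HasDerivAt u (v t) t)
    (hv : ∀ t, HasDerivAt v (-deriv V (u t)) t) (hs : ∀ t, u t ∈ s) {r : ℝ} (hr : v r = 0)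
    (t : ℝ) : u (2 * r - t) = u t ∧ v (2 * r - t) = -v t := by
  set W : ℝ × ℝ → ℝ × ℝ := fun p => (p.2, -deriv V p.1)
  have hW : LipschitzOnWith (max 1 K) W (s ×ˢ univ) :=
    LipschitzWith.prod_snd.lipschitzOnWith.prodMk (by
      simpa [Function.comp_def] using (LipschitzWith.id.neg.comp_lipschitzOnWith hK).comp
        LipschitzWith.prod_fst.lipschitzOnWith fun p hp => hp.1)
  have hfwd : ∀ τ, HasDerivAt (fun τ => (u τ, v τ)) (W (u τ, v τ)) τ ∧ (u τ, v τ) ∈ s ×ˢ univ :=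
    fun τ => ⟨(hu τ).prodMk (hv τ), hs τ, trivial⟩
  have hbwd : ∀ τ, HasDerivAt (fun τ => (u (2 * r - τ), -v (2 * r - τ)))
      (W (u (2 * r - τ), -v (2 * r - τ))) τ ∧ (u (2 * r - τ), -v (2 * r - τ)) ∈ s ×ˢ univ := by
    intro τ
    have hrefl : HasDerivAt (fun τ : ℝ => 2 * r - τ) (-1) τ := by
      simpa using (hasDerivAt_id τ).const_sub (2 * r)
    refine ⟨?_, hs _, trivial⟩
    simpa [W] using ((hu _).comp τ hrefl).prodMk ((hv _).comp τ hrefl).neg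
  have h := congrFun (ODE_solution_unique_univ (fun _ => hW) hbwd hfwd (t₀ := r)
    (by simp [show 2 * r - r = r by ring, hr])) t
  simp only [Prod.mk.injEq] at h
  exact ⟨h.1, by linarith [h.2]⟩

/-- For a mechanical Hamiltonian system `u̇ = v`, `v̇ = -V'(u)` with a
potential well between consecutive turning points `uLo < uHi` at energy `c`
(with `V(uLo) = V(uHi) = c`, `V < c` inside and nondegenerate turning points),
the solution starting at `(uLo, 0)` is periodic, the improper integral
`∫ du / √(2(c - V(u)))` converges, and the period equals
`T_c = 2 ∫_{uLo}^{uHi} du / √(2(c - V(u)))`. -/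
theorem period_of_potential_well_orbit
    (V : ℝ → ℝ) (hV : ContDiff ℝ 2 V)
    (c uLo uHi : ℝ) (hlt : uLo < uHi)
    (hVm : V uLo = c) (hVp : V uHi = c)
    (hVin : ∀ x ∈ Set.Ioo uLo uHi, V x < c)
    (hV'm : deriv V uLo < 0) (hV'p : 0 < deriv V uHi)
    (u v : ℝ → ℝ)
    (hu : ∀ t : ℝ, HasDerivAt u (v t) t)
    (hv : ∀ t : ℝ, HasDerivAt v (-deriv V (u t)) t)
    (hu0 : u 0 = uLo) (hv0 : v 0 = 0) :
    IntervalIntegrable (fun x => 1 / Real.sqrt (2 * (c - V x))) volume uLo uHi ∧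
    0 < 2 * ∫ x in uLo..uHi, 1 / Real.sqrt (2 * (c - V x)) ∧
    (∀ t : ℝ,
      u (t + 2 * ∫ x in uLo..uHi, 1 / Real.sqrt (2 * (c - V x))) = u t ∧
      v (t + 2 * ∫ x in uLo..uHi, 1 / Real.sqrt (2 * (c - V x))) = v t) := by
  have hVd : Differentiable ℝ V := hV.differentiable two_ne_zero
  have hE : ∀ t, v t ^ 2 = 2 * (c - V (u t)) := fun t => by
    have h := newton_energy_eq hVd hu hv 0 t
    rw [hu0, hv0, hVm] at h
    linarith
  have hmem : ∀ t, u t ∈ Icc uLo uHi := fun t =>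
    range_subset_Icc_of_potential_le (continuous_iff_continuousAt.2 fun t => (hu t).continuousAt)
      ⟨0, hu0⟩ hlt.le hVm hVp (hVd uLo).hasDerivAt (hVd uHi).hasDerivAt hV'm hV'p
      (fun t => by linarith [hE t, sq_nonneg (v t)]) ⟨t, rfl⟩
  have hint := intervalIntegrable_one_div_sqrt_of_potential_well hVd.continuous hlt hVm hVp hVin
    (hVd uLo).hasDerivAt (hVd uHi).hasDerivAt hV'm hV'p
  obtain ⟨T, hT, hvT, hIT⟩ :=
    exists_turning_time_eq_integral hVd.continuous hVin hu hv hE hmem hint hu0 hv0 hV'm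
  obtain ⟨K, hK⟩ := (hV.deriv' (n := 1)).contDiffOn.exists_lipschitzOnWith one_ne_zero
    (convex_Icc uLo uHi) isCompact_Icc
  refine ⟨hint, by linarith, fun t => ?_⟩
  obtain ⟨hu₀, hv₀⟩ := newton_time_reversal hK hu hv hmem hv0 (-t)
  obtain ⟨huT, hvT'⟩ := newton_time_reversal hK hu hv hmem hvT (-t)
  rw [hIT, show t + 2 * T = 2 * T - -t by ring]
  rw [show 2 * (0 : ℝ) - -t = t by ring] at hu₀ hv₀
  exact ⟨huT.trans hu₀.symm, by linarith⟩
end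

section
/- Let m and n be coprime positive integers with n ≥ 2, let T > 0, and set T_c = mT/n. Let p : ℝ → ℝ be locally integrable and T_c-periodic (p(t + T_c) = p(t) for almost every t). Then for every t₀ ∈ ℝ, ∫₀^{mT} p(t) sin((2π/T)(t + t₀)) dt = 0. In particular, for a forcing g(x,t) = sin(ωt) with ω = 2π/T, the subharmonic Melnikov function along any T_c-periodic unperturbed orbit with rotation number n/m, n ≥ 2, is identically zero. -/
/-!
The integral `I = ∫₀^{mT} p(t) e^{iω(t+t₀)} dt`, `ω = 2π/T`, has the sine integral as its
imaginary part. After replacing `p` by a genuinely `T_c`-periodic representative, the integrand is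
`mT`-periodic, so translating the integral by `T_c` leaves it unchanged; on the other hand the
translation multiplies it by `e^{iωT_c} = e^{2πi m/n}`, a primitive `n`-th root of unity, which is
not `1` because `n ≥ 2`. Hence `I = 0`.
-/

open MeasureTheory intervalIntegral Real

namespace MeasureTheory

section aePeriods

variable {G α : Type*} [AddGroup G] [MeasurableSpace G] [MeasurableAdd G]
  (μ : Measure G) [μ.IsAddRightInvariant]

def aePeriods (p : G → α) : AddSubgroup G where
  carrier := {a | ∀ᵐ t ∂μ, p (t + a) = p t}
  zero_mem' := by simp
  add_mem' {a b} ha hb := by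
    filter_upwards [ha, (measurePreserving_add_right μ a).quasiMeasurePreserving.ae hb]
      with t hta htab
    rw [← add_assoc, htab, hta]
  neg_mem' {a} ha := by
    filter_upwards [(measurePreserving_add_right μ (-a)).quasiMeasurePreserving.ae ha]
      with t ht
    rwa [neg_add_cancel_right, eq_comm] at ht

end aePeriods

theorem exists_periodic_ae_eq_of_ae_add_eq {G α : Type*} [AddCommGroup G] [LinearOrder G]
    [IsOrderedAddMonoid G] [Archimedean G] [MeasurableSpace G] [MeasurableAdd G]
    {μ : Measure G} [μ.IsAddRightInvariant] {p : G → α} {c : G} (hc : 0 < c)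
    (hp : ∀ᵐ t ∂μ, p (t + c) = p t) :
    ∃ q : G → α, Function.Periodic q c ∧ q =ᵐ[μ] p := by
  refine ⟨fun t => p (toIcoMod hc 0 t), fun t => by simp only [toIcoMod_add_right], ?_⟩
  have hzsmul (k : ℤ) : ∀ᵐ t ∂μ, p (t + k • c) = p t := (aePeriods μ p).zsmul_mem hp k
  filter_upwards [ae_all_iff.2 fun k : ℤ => hzsmul (-k)] with t ht
  rw [← self_sub_toIcoDiv_zsmul, sub_eq_add_neg, ← neg_zsmul]
  exact ht _

end MeasureTheory

namespace Complex

theorem exp_ofReal_mul_add_mul_I (ω s d : ℝ) :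
    cexp (↑(ω * (s + d)) * I) = cexp (↑(ω * d) * I) * cexp (↑(ω * s) * I) := by
  rw [← exp_add]; push_cast; ring_nf

theorem exp_ofReal_two_pi_mul_div_mul_I_ne_one {m n : ℕ} (hmn : m.Coprime n) (hn : 2 ≤ n) :
    cexp (↑(2 * π * (m / n)) * I) ≠ 1 := by
  push_cast
  rw [mul_assoc, mul_comm _ I, ← mul_assoc]
  exact (isPrimitiveRoot_exp_of_coprime m n (by omega) hmn).ne_one (by omega)

end Complex

section

open Complex

theorem Function.Periodic.intervalIntegral_mul_cexp_eq_zero {q : ℝ → ℂ} {c L ω : ℝ}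
    (hqc : Function.Periodic q c) (hqL : Function.Periodic q L)
    (hL : cexp (↑(ω * L) * I) = 1) (hc : cexp (↑(ω * c) * I) ≠ 1) (t₀ : ℝ) :
    ∫ t in (0:ℝ)..L, q t * cexp (↑(ω * (t + t₀)) * I) = 0 := by
  set h : ℝ → ℂ := fun t => q t * cexp (↑(ω * (t + t₀)) * I)
  have hper : Function.Periodic h L := fun t => by
    simp only [h, hqL t]
    rw [add_right_comm, exp_ofReal_mul_add_mul_I ω _ L, hL, one_mul]
  have hshift (t : ℝ) : h (t + c) = cexp (↑(ω * c) * I) * h t := by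
    simp only [h, hqc t]
    rw [add_right_comm, exp_ofReal_mul_add_mul_I ω _ c, mul_left_comm]
  have hfix : ∫ t in (0:ℝ)..L, h t = cexp (↑(ω * c) * I) * ∫ t in (0:ℝ)..L, h t :=
    calc ∫ t in (0:ℝ)..L, h t = ∫ t in c..c + L, h t := by
          simpa using hper.intervalIntegral_add_eq 0 c
      _ = ∫ t in (0:ℝ)..L, h (t + c) := by
          rw [integral_comp_add_right, zero_add, add_comm]
      _ = _ := by simp only [hshift, intervalIntegral.integral_const_mul]
  have hfactor := sub_eq_zero.2 hfix
  rw [← one_sub_mul, mul_eq_zero, sub_eq_zero] at hfactor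
  exact hfactor.resolve_left hc.symm

theorem Function.Periodic.intervalIntegral_mul_sin_eq_zero {q : ℝ → ℝ} {c L ω : ℝ}
    (hqc : Function.Periodic q c) (hqL : Function.Periodic q L)
    (hint : IntegrableOn q (Set.uIcc 0 L))
    (hL : cexp (↑(ω * L) * I) = 1) (hc : cexp (↑(ω * c) * I) ≠ 1) (t₀ : ℝ) :
    ∫ t in (0:ℝ)..L, q t * Real.sin (ω * (t + t₀)) = 0 := by
  have hint' : IntervalIntegrable (fun t => (q t : ℂ) * cexp (↑(ω * (t + t₀)) * I)) volume 0 L :=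
    (IntegrableOn.mul_continuousOn hint.ofReal (by fun_prop) isCompact_uIcc).intervalIntegrable
  calc ∫ t in (0:ℝ)..L, q t * Real.sin (ω * (t + t₀))
      = (∫ t in (0:ℝ)..L, (q t : ℂ) * cexp (↑(ω * (t + t₀)) * I)).im := by
        rw [← RCLike.im_to_complex, ← intervalIntegral_im hint']
        simp only [RCLike.im_to_complex, im_ofReal_mul, exp_ofReal_mul_I_im]
    _ = 0 :=
        (congrArg im ((hqc.comp ofReal).intervalIntegral_mul_cexp_eq_zero (hqL.comp ofReal)
          hL hc t₀)).trans zero_im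

end

/-- If `m, n` are coprime positive integers with `n ≥ 2`, `T > 0`,
`T_c = mT/n`, and `p` is locally integrable and `T_c`-periodic (a.e.), then
`∫₀^{mT} p(t) sin((2π/T)(t + t₀)) dt = 0` for every `t₀`.  In particular the
subharmonic Melnikov function for the forcing `sin(ωt)`, `ω = 2π/T`, along any
orbit with rotation number `n/m`, `n ≥ 2`, vanishes identically. -/
theorem melnikov_vanishes_for_pure_harmonic_forcing
    (m n : ℕ) (hm : 0 < m) (hn : 2 ≤ n) (hmn : Nat.Coprime m n)
    (T : ℝ) (hT : 0 < T)
    (Tc : ℝ) (hTc : Tc = (m : ℝ) * T / (n : ℝ))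
    (p : ℝ → ℝ) (hp : LocallyIntegrable p volume)
    (hper : ∀ᵐ t : ℝ ∂volume, p (t + Tc) = p t) :
    ∀ t₀ : ℝ, ∫ t in (0:ℝ)..((m : ℝ) * T), p t * Real.sin (2 * π / T * (t + t₀)) = 0 := by
  intro t₀
  have hn0 : (n : ℝ) ≠ 0 := by exact_mod_cast (by omega : n ≠ 0)
  have hTc0 : 0 < Tc := by rw [hTc]; positivity
  have hL : (n : ℝ) * Tc = m * T := by rw [hTc]; field_simp
  have hωL : 2 * π / T * (m * T) = m * (2 * π) := by field_simp
  have hωTc : 2 * π / T * Tc = 2 * π * (m / n) := by rw [hTc]; field_simp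
  obtain ⟨q, hq, hqp⟩ := exists_periodic_ae_eq_of_ae_add_eq hTc0 hper
  calc ∫ t in (0:ℝ)..(m * T), p t * Real.sin (2 * π / T * (t + t₀))
      = ∫ t in (0:ℝ)..(m * T), q t * Real.sin (2 * π / T * (t + t₀)) :=
        integral_congr_ae (by filter_upwards [hqp] with t ht _ using by rw [ht])
    _ = 0 := by
        refine hq.intervalIntegral_mul_sin_eq_zero (hL ▸ hq.nat_mul n)
          ((hp.congr hqp.symm).integrableOn_isCompact isCompact_uIcc) ?_ ?_ t₀
        · rw [hωL]; push_cast; rw [mul_assoc]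
          exact Complex.exp_nat_mul_two_pi_mul_I m
        · rw [hωTc]
          exact Complex.exp_ofReal_two_pi_mul_div_mul_I_ne_one hmn hn
end

section
/- Let E be a finite-dimensional real normed vector space, let F : E → E be C¹ with DF Lipschitz on a neighborhood of a point x* (in particular this holds if F is C²), and suppose F(x*) = 0 and DF(x*) is invertible. Then there exist δ > 0 and C > 0 such that for every x₀ with ‖x₀ − x*‖ < δ, the Newton iteration x_{k+1} = x_k − (DF(x_k))⁻¹ F(x_k) is well defined for all k (i.e. DF(x_k) is invertible and ‖x_k − x*‖ < δ for all k), the sequence (x_k) converges to x*, and the convergence is quadratic: ‖x_{k+1} − x*‖ ≤ C ‖x_k − x*‖² for all k. -/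
/-!
Near `x*` the derivative stays invertible with `‖DF(x)⁻¹‖ ≤ M`. The Newton error is
`x_{k+1} - x* = DF(x_k)⁻¹ (F x* - F x_k - DF(x_k)(x* - x_k))`, and the mean value inequality
applied to `F - DF(x_k)` along the segment `[x_k, x*]`, where `DF` is `K`-Lipschitz, bounds the
bracket by `K ‖x_k - x*‖²`. Hence `‖x_{k+1} - x*‖ ≤ C ‖x_k - x*‖²`, so on a ball of radius `δ`
with `C δ ≤ 1/2` each step at least halves the distance to `x*`: the iterates never leave the
ball and converge to `x*`.
-/

/-- One step of the Newton method for solving `F(x) = 0`: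
`x ↦ x - (DF(x))⁻¹ F(x)`, where the inverse is the inverse of the Fréchet
derivative as a continuous linear map (junk value `0` if not invertible). -/
noncomputable def newtonStep {E : Type*} [NormedAddCommGroup E] [NormedSpace ℝ E]
    (F : E → E) (x : E) : E :=
  x - (fderiv ℝ F x).inverse (F x)

open Filter Topology Metric

theorem norm_image_sub_sub_fderiv_le_of_lipschitzOnWith
    {E G : Type*} [NormedAddCommGroup E] [NormedSpace ℝ E] [NormedAddCommGroup G]
    [NormedSpace ℝ G] {f : E → G} {s : Set E} {K : NNReal} {x y : E}
    (hf : ∀ z ∈ s, DifferentiableAt ℝ f z) (hlip : LipschitzOnWith K (fderiv ℝ f) s)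
    (hs : Convex ℝ s) (hx : x ∈ s) (hy : y ∈ s) :
    ‖f y - f x - fderiv ℝ f x (y - x)‖ ≤ K * ‖y - x‖ ^ 2 := by
  have hseg : segment ℝ x y ⊆ s := hs.segment_subset hx hy
  have bound : ∀ z ∈ segment ℝ x y, ‖fderiv ℝ f z - fderiv ℝ f x‖ ≤ K * ‖y - x‖ := fun z hz =>
    calc ‖fderiv ℝ f z - fderiv ℝ f x‖ ≤ K * ‖z - x‖ := hlip.norm_sub_le (hseg hz) hx
      _ ≤ K * ‖y - x‖ := by gcongr; exact norm_sub_le_of_mem_segment hz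
  calc ‖f y - f x - fderiv ℝ f x (y - x)‖ ≤ K * ‖y - x‖ * ‖y - x‖ :=
        (convex_segment x y).norm_image_sub_le_of_norm_fderiv_le' (fun z hz => hf z (hseg hz)) bound
          (left_mem_segment ℝ x y) (right_mem_segment ℝ x y)
    _ = K * ‖y - x‖ ^ 2 := by ring

theorem eventually_isUnit_and_norm_ringInverse_lt {X R : Type*} [TopologicalSpace X]
    [NormedRing R] [HasSummableGeomSeries R] {f : X → R} {a : X}
    (hf : ContinuousAt f a) (ha : IsUnit (f a)) :
    ∀ᶠ x in 𝓝 a, IsUnit (f x) ∧ ‖Ring.inverse (f x)‖ < ‖Ring.inverse (f a)‖ + 1 := by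
  have hinv : ContinuousAt (fun x => Ring.inverse (f x)) a := by
    have := NormedRing.inverse_continuousAt ha.unit
    rw [IsUnit.unit_spec] at this
    exact this.comp hf
  exact (hf.eventually (Units.isOpen.mem_nhds ha)).and
    (hinv.norm.eventually_lt_const (lt_add_one _))

section Newton

variable {E : Type*} [NormedAddCommGroup E] [NormedSpace ℝ E] {F : E → E}

theorem newtonStep_sub_eq {x xstar : E} (hx : IsUnit (fderiv ℝ F x)) (hzero : F xstar = 0) :
    newtonStep F x - xstar =
      (fderiv ℝ F x).inverse (F xstar - F x - fderiv ℝ F x (xstar - x)) := by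
  have hcancel : (fderiv ℝ F x).inverse (fderiv ℝ F x (xstar - x)) = xstar - x := by
    rw [← ContinuousLinearMap.ringInverse_eq_inverse, ← mul_apply_eq_comp,
      Ring.inverse_mul_cancel _ hx, one_apply_eq_self]
  rw [newtonStep, map_sub, map_sub, hcancel, hzero, map_zero]
  abel

theorem norm_newtonStep_sub_le {x xstar : E} {K : NNReal} {s : Set E}
    (hF : ∀ z ∈ s, DifferentiableAt ℝ F z) (hlip : LipschitzOnWith K (fderiv ℝ F) s)
    (hs : Convex ℝ s) (hxs : x ∈ s) (hxstar : xstar ∈ s)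
    (hx : IsUnit (fderiv ℝ F x)) (hzero : F xstar = 0) :
    ‖newtonStep F x - xstar‖ ≤ ‖(fderiv ℝ F x).inverse‖ * (K * ‖x - xstar‖ ^ 2) := by
  rw [newtonStep_sub_eq hx hzero, ← norm_neg (x - xstar), neg_sub]
  exact (ContinuousLinearMap.le_opNorm _ _).trans <| by
    gcongr
    exact norm_image_sub_sub_fderiv_le_of_lipschitzOnWith hF hlip hs hxs hxstar

theorem exists_norm_newtonStep_sub_le_sq [CompleteSpace E] {xstar : E} {K : NNReal} {U : Set E}
    (hU : U ∈ 𝓝 xstar) (hF : ∀ z ∈ U, DifferentiableAt ℝ F z)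
    (hlip : LipschitzOnWith K (fderiv ℝ F) U) (hzero : F xstar = 0)
    (hinv : IsUnit (fderiv ℝ F xstar)) :
    ∃ ε > (0 : ℝ), ∃ C > (0 : ℝ), ∀ x, ‖x - xstar‖ ≤ ε →
      IsUnit (fderiv ℝ F x) ∧ ‖newtonStep F x - xstar‖ ≤ C * ‖x - xstar‖ ^ 2 := by
  obtain ⟨ε, hε, hball⟩ := nhds_basis_closedBall.mem_iff.mp
    ((eventually_isUnit_and_norm_ringInverse_lt (hlip.continuousOn.continuousAt hU) hinv).and hU)
  set M := ‖Ring.inverse (fderiv ℝ F xstar)‖ + 1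
  have hsub : closedBall xstar ε ⊆ U := fun z hz => (hball hz).2
  refine ⟨ε, hε, M * K + 1, by positivity, fun x hx => ?_⟩
  have hxball : x ∈ closedBall xstar ε := by rwa [mem_closedBall, dist_eq_norm]
  obtain ⟨⟨hunit, hM⟩, -⟩ := hball hxball
  rw [ContinuousLinearMap.ringInverse_eq_inverse] at hM
  refine ⟨hunit, ?_⟩
  calc ‖newtonStep F x - xstar‖ ≤ ‖(fderiv ℝ F x).inverse‖ * (K * ‖x - xstar‖ ^ 2) :=
        norm_newtonStep_sub_le (fun z hz => hF z (hsub hz)) (hlip.mono hsub)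
          (convex_closedBall _ _) hxball (mem_closedBall_self hε.le) hunit hzero
    _ ≤ M * (K * ‖x - xstar‖ ^ 2) := by gcongr
    _ ≤ (M * K + 1) * ‖x - xstar‖ ^ 2 := by nlinarith [sq_nonneg ‖x - xstar‖]

end Newton

section QuadraticConvergence

variable {X : Type*} [PseudoMetricSpace X] {T : X → X} {a : X} {δ C : ℝ}

theorem dist_map_le_half_of_dist_map_le_sq
    (hT : ∀ x, dist x a < δ → dist (T x) a ≤ C * dist x a ^ 2) (hCδ : C * δ ≤ 1 / 2)
    {x : X} (hx : dist x a < δ) : dist (T x) a ≤ 1 / 2 * dist x a := by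
  have hd := dist_nonneg (x := x) (y := a)
  have : C * dist x a ^ 2 ≤ 1 / 2 * dist x a := by
    rcases le_or_gt 0 C with hC | hC
    · nlinarith [mul_le_mul_of_nonneg_left hx.le hC]
    · nlinarith [sq_nonneg (dist x a)]
  exact (hT x hx).trans this

theorem dist_iterate_lt_of_dist_map_le_sq
    (hT : ∀ x, dist x a < δ → dist (T x) a ≤ C * dist x a ^ 2) (hCδ : C * δ ≤ 1 / 2)
    {x : X} (hx : dist x a < δ) (k : ℕ) : dist (T^[k] x) a < δ := by
  induction k with
  | zero => exact hx
  | succ k ih =>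
    rw [Function.iterate_succ_apply']
    exact (dist_map_le_half_of_dist_map_le_sq hT hCδ ih).trans_lt
      (by linarith [dist_nonneg (x := T^[k] x) (y := a)])

theorem dist_iterate_le_of_dist_map_le_sq
    (hT : ∀ x, dist x a < δ → dist (T x) a ≤ C * dist x a ^ 2) (hCδ : C * δ ≤ 1 / 2)
    {x : X} (hx : dist x a < δ) (k : ℕ) : dist (T^[k] x) a ≤ (1 / 2) ^ k * dist x a := by
  induction k with
  | zero => simp
  | succ k ih =>
    rw [Function.iterate_succ_apply', pow_succ', mul_assoc]
    exact (dist_map_le_half_of_dist_map_le_sq hT hCδ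
      (dist_iterate_lt_of_dist_map_le_sq hT hCδ hx k)).trans (by gcongr)

theorem tendsto_iterate_of_dist_map_le_sq
    (hT : ∀ x, dist x a < δ → dist (T x) a ≤ C * dist x a ^ 2) (hCδ : C * δ ≤ 1 / 2)
    {x : X} (hx : dist x a < δ) : Tendsto (fun k => T^[k] x) atTop (𝓝 a) := by
  refine tendsto_iff_dist_tendsto_zero.mpr (squeeze_zero (fun _ => dist_nonneg)
    (dist_iterate_le_of_dist_map_le_sq hT hCδ hx) ?_)
  simpa using (tendsto_pow_atTop_nhds_zero_of_lt_one (by norm_num : (0 : ℝ) ≤ 1 / 2)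
    (by norm_num)).mul_const (dist x a)

end QuadraticConvergence

/-- Local quadratic convergence of the Newton method.  If `F : E → E`
is C¹ on a finite-dimensional real normed space with `DF` Lipschitz near a zero `x✶`
of `F` at which `DF(x✶)` is invertible, then there are `δ > 0` and `C > 0` such that
for every starting point `x₀` with `‖x₀ - x✶‖ < δ` the Newton iterates are well
defined (the derivative is invertible at each of them and they stay `δ`-close to
`x✶`), converge to `x✶`, and satisfy `‖x_{k+1} - x✶‖ ≤ C ‖x_k - x✶‖²`. -/
theorem newton_method_quadratic_convergence
    {E : Type*} [NormedAddCommGroup E] [NormedSpace ℝ E] [FiniteDimensional ℝ E]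
    (F : E → E) (hF : ContDiff ℝ 1 F)
    (xstar : E)
    (hlip : ∃ (K : NNReal) (U : Set E), U ∈ nhds xstar ∧
      LipschitzOnWith K (fun x => fderiv ℝ F x) U)
    (hzero : F xstar = 0)
    (hinv : IsUnit (fderiv ℝ F xstar)) :
    ∃ δ > (0 : ℝ), ∃ C > (0 : ℝ), ∀ x₀ : E, ‖x₀ - xstar‖ < δ →
      (∀ k : ℕ, IsUnit (fderiv ℝ F ((newtonStep F)^[k] x₀)) ∧
        ‖(newtonStep F)^[k] x₀ - xstar‖ < δ) ∧
      Filter.Tendsto (fun k : ℕ => (newtonStep F)^[k] x₀) Filter.atTop (nhds xstar) ∧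
      ∀ k : ℕ, ‖(newtonStep F)^[k + 1] x₀ - xstar‖ ≤ C * ‖(newtonStep F)^[k] x₀ - xstar‖ ^ 2 := by
  obtain ⟨K, U, hU, hK⟩ := hlip
  obtain ⟨ε, hε, C, hC, hstep⟩ := exists_norm_newtonStep_sub_le_sq hU
    (fun z _ => hF.differentiable one_ne_zero z) hK hzero hinv
  set δ := min ε (1 / (2 * C))
  have hδε : δ ≤ ε := min_le_left _ _
  have hCδ : C * δ ≤ 1 / 2 := by
    calc C * δ ≤ C * (1 / (2 * C)) := by gcongr; exact min_le_right _ _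
      _ = 1 / 2 := by field_simp
  have hT : ∀ x, dist x xstar < δ → dist (newtonStep F x) xstar ≤ C * dist x xstar ^ 2 := by
    simp only [dist_eq_norm]
    exact fun x hx => (hstep x (hx.le.trans hδε)).2
  refine ⟨δ, by positivity, C, hC, fun x₀ hx₀ => ?_⟩
  rw [← dist_eq_norm] at hx₀
  have hnear (k : ℕ) : ‖(newtonStep F)^[k] x₀ - xstar‖ < δ := by
    rw [← dist_eq_norm]
    exact dist_iterate_lt_of_dist_map_le_sq hT hCδ hx₀ k
  refine ⟨fun k => ⟨(hstep _ ((hnear k).le.trans hδε)).1, hnear k⟩,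
    tendsto_iterate_of_dist_map_le_sq hT hCδ hx₀, fun k => ?_⟩
  rw [Function.iterate_succ_apply']
  exact (hstep _ ((hnear k).le.trans hδε)).2
end
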